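/- Let Z be a finite nonempty set, c : Z × Z → ℝ a cost function whose diagonal D = {(z,z) : z ∈ Z} is c-cyclically monotone, and p ∈ Δ(Z). Then the diagonal coupling γ_D defined by γ_D(z,z') = p(z) if z = z' and 0 otherwise is a c-optimal coupling of p with itself; that is, Σ_z p(z)·c(z,z) ≤ Σ_{z,z'} c(z,z')·γ(z,z') for every coupling γ of p and p. -/

import Mathlib

/-! Put `d x y = c x y - c x x`. Cyclic monotonicity of the diagonal says exactly that every
closed walk has nonnegative `d`-cost. Following Rockafellar, the infimum `φ x` of the `d`-costs of
walks ending at `x` is then finite and satisfies `φ y ≤ φ x + d x y`. A coupling `γ` of `p` with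
itself is a circulation, so `∑ γ x y * (φ y - φ x) = 0`; hence `∑ γ x y * d x y ≥ 0`, which says
that `γ` costs at least `∑ p z * c z z`, the cost of the diagonal coupling. -/

open Finset

/-- `p` is a probability vector on the finite set `Z`. -/
def IsProbVec {Z : Type*} [Fintype Z] (p : Z → ℝ) : Prop :=
  (∀ z, 0 ≤ p z) ∧ ∑ z, p z = 1

/-- `γ` is a coupling of `p` and `q`. -/
def IsCoupling {X Y : Type*} [Fintype X] [Fintype Y]
    (γ : X → Y → ℝ) (p : X → ℝ) (q : Y → ℝ) : Prop :=
  (∀ x y, 0 ≤ γ x y) ∧ (∀ x, ∑ y, γ x y = p x) ∧ (∀ y, ∑ x, γ x y = q y)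

/-- Total transport cost of `γ` under the cost function `c`. -/
noncomputable def transportCost {X Y : Type*} [Fintype X] [Fintype Y]
    (c : X → Y → ℝ) (γ : X → Y → ℝ) : ℝ :=
  ∑ x, ∑ y, c x y * γ x y

/-- `γ` is a `c`-optimal coupling of `p` and `q`. -/
def IsOptimalCoupling {X Y : Type*} [Fintype X] [Fintype Y]
    (c : X → Y → ℝ) (γ : X → Y → ℝ) (p : X → ℝ) (q : Y → ℝ) : Prop :=
  IsCoupling γ p q ∧
    ∀ γ' : X → Y → ℝ, IsCoupling γ' p q → transportCost c γ ≤ transportCost c γ'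

/-- The set `S ⊆ Z × Z` is `c`-cyclically monotone. -/
def CyclMono {Z : Type*} (c : Z → Z → ℝ) (S : Set (Z × Z)) : Prop :=
  ∀ J : ℕ, ∀ z z' : Fin (J + 2) → Z, (∀ j, (z j, z' j) ∈ S) →
    ∑ j, c (z j) (z' j) ≤ ∑ j, c (z j) (z' (j + 1))

section Potential

variable {Z : Type*}

def pathCost (d : Z → Z → ℝ) {n : ℕ} (u : Fin (n + 1) → Z) : ℝ :=
  ∑ i : Fin n, d (u i.castSucc) (u i.succ)

lemma pathCost_snoc (d : Z → Z → ℝ) {n : ℕ} (u : Fin (n + 1) → Z) (y : Z) :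
    pathCost d (Fin.snoc u y : Fin (n + 2) → Z) = pathCost d u + d (u (Fin.last n)) y := by
  rw [pathCost, Fin.sum_univ_castSucc]
  simp only [Fin.succ_castSucc, Fin.snoc_castSucc, Fin.succ_last, Fin.snoc_last, pathCost]

lemma sum_cyclic_eq_pathCost_add (d : Z → Z → ℝ) {n : ℕ} (u : Fin (n + 1) → Z) :
    ∑ j, d (u j) (u (j + 1)) = pathCost d u + d (u (Fin.last n)) (u 0) := by
  rw [Fin.sum_univ_castSucc, Fin.last_add_one]
  simp only [pathCost, Fin.coeSucc_eq_succ]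

def HasNonnegCycles (d : Z → Z → ℝ) : Prop :=
  ∀ n (u : Fin (n + 1) → Z), 0 ≤ pathCost d u + d (u (Fin.last n)) (u 0)

def pathCostsTo (d : Z → Z → ℝ) (x : Z) : Set ℝ :=
  {r | ∃ n, ∃ u : Fin (n + 1) → Z, u (Fin.last n) = x ∧ pathCost d u = r}

lemma bddBelow_pathCostsTo [Finite Z] {d : Z → Z → ℝ} (hd : HasNonnegCycles d) (x : Z) :
    BddBelow (pathCostsTo d x) := by
  obtain ⟨M, hM⟩ := (Set.finite_range (d x)).bddAbove
  refine ⟨-M, ?_⟩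
  rintro _ ⟨n, u, rfl, rfl⟩
  linarith [hd n u, hM (Set.mem_range_self (u 0))]

theorem HasNonnegCycles.exists_potential [Finite Z] {d : Z → Z → ℝ} (hd : HasNonnegCycles d) :
    ∃ φ : Z → ℝ, ∀ x y, φ y ≤ φ x + d x y := by
  refine ⟨fun x => sInf (pathCostsTo d x), fun x y => ?_⟩
  have hne : (pathCostsTo d x).Nonempty := ⟨0, 0, fun _ => x, rfl, by simp [pathCost]⟩
  rw [← sub_le_iff_le_add]
  refine le_csInf hne ?_
  rintro _ ⟨n, u, rfl, rfl⟩
  rw [sub_le_iff_le_add, ← pathCost_snoc]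
  exact csInf_le (bddBelow_pathCostsTo hd y) ⟨n + 1, Fin.snoc u y, by simp, rfl⟩

lemma hasNonnegCycles_of_cyclMono_diagonal {c : Z → Z → ℝ}
    (hc : CyclMono c {zz : Z × Z | zz.1 = zz.2}) :
    HasNonnegCycles fun x y => c x y - c x x := by
  rintro (_ | J) u
  · simp [pathCost, Fin.last_zero]
  · rw [← sum_cyclic_eq_pathCost_add (fun x y => c x y - c x x), Finset.sum_sub_distrib,
      sub_nonneg]
    exact hc J u u fun _ => rfl

end Potential

section Circulation

variable {Z : Type*} [Fintype Z]

lemma sum_sum_mul_sub_eq_zero {γ : Z → Z → ℝ} (hγ : ∀ z, ∑ w, γ z w = ∑ w, γ w z)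
    (φ : Z → ℝ) : ∑ x, ∑ y, γ x y * (φ y - φ x) = 0 := by
  simp only [mul_sub, Finset.sum_sub_distrib]
  rw [Finset.sum_comm, sub_eq_zero]
  refine Finset.sum_congr rfl fun z _ => ?_
  rw [← Finset.sum_mul, ← Finset.sum_mul, hγ]

lemma sum_sum_mul_nonneg_of_potential {γ d : Z → Z → ℝ} {φ : Z → ℝ}
    (hγ₀ : ∀ x y, 0 ≤ γ x y) (hγ : ∀ z, ∑ w, γ z w = ∑ w, γ w z)
    (hφ : ∀ x y, φ y ≤ φ x + d x y) : 0 ≤ ∑ x, ∑ y, γ x y * d x y := by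
  calc 0 = ∑ x, ∑ y, γ x y * (φ y - φ x) := (sum_sum_mul_sub_eq_zero hγ φ).symm
    _ ≤ ∑ x, ∑ y, γ x y * d x y := by
      gcongr with x _ y _
      · exact hγ₀ x y
      · linarith [hφ x y]

lemma sum_mul_diag_le_of_isCoupling {c γ : Z → Z → ℝ} {p φ : Z → ℝ} (hγ : IsCoupling γ p p)
    (hφ : ∀ x y, φ y ≤ φ x + (c x y - c x x)) :
    ∑ z, p z * c z z ≤ ∑ z, ∑ z', c z z' * γ z z' := by
  obtain ⟨hγ₀, hrow, hcol⟩ := hγ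
  have hcirc : ∀ z, ∑ w, γ z w = ∑ w, γ w z := fun z => by rw [hrow, hcol]
  have hsplit : ∑ z, ∑ z', c z z' * γ z z' - ∑ z, p z * c z z
      = ∑ z, ∑ z', γ z z' * (c z z' - c z z) := by
    simp only [← hrow, Finset.mul_sum, ← Finset.sum_sub_distrib, mul_sub, mul_comm]
  linarith [sum_sum_mul_nonneg_of_potential hγ₀ hcirc hφ]

end Circulation

section Diagonal

variable {Z : Type*} [Fintype Z] [DecidableEq Z]

lemma isCoupling_diagonal {p : Z → ℝ} (hp : ∀ z, 0 ≤ p z) :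
    IsCoupling (fun z z' => if z = z' then p z else 0) p p := by
  refine ⟨fun x y => ?_, fun x => by simp, fun y => by simp⟩
  dsimp only
  split_ifs
  exacts [hp x, le_rfl]

lemma transportCost_diagonal (c : Z → Z → ℝ) (p : Z → ℝ) :
    transportCost c (fun z z' => if z = z' then p z else 0) = ∑ z, p z * c z z := by
  simp [transportCost, mul_comm]

end Diagonal

theorem diagonal_coupling_optimal {Z : Type*} [Fintype Z]
    [DecidableEq Z]
    (c : Z → Z → ℝ) (hdiag : CyclMono c {zz : Z × Z | zz.1 = zz.2})
    (p : Z → ℝ) (hp : IsProbVec p) :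
    IsOptimalCoupling c (fun z z' => if z = z' then p z else 0) p p ∧
      ∀ γ : Z → Z → ℝ, IsCoupling γ p p →
        ∑ z, p z * c z z ≤ ∑ z, ∑ z', c z z' * γ z z' := by
  obtain ⟨φ, hφ⟩ := (hasNonnegCycles_of_cyclMono_diagonal hdiag).exists_potential
  have key : ∀ γ : Z → Z → ℝ, IsCoupling γ p p →
      ∑ z, p z * c z z ≤ ∑ z, ∑ z', c z z' * γ z z' :=
    fun γ hγ => sum_mul_diag_le_of_isCoupling hγ hφ
  refine ⟨⟨isCoupling_diagonal hp.1, fun γ hγ => ?_⟩, key⟩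
  rw [transportCost_diagonal]
  exact key γ hγ
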